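/- Let p ∈ (2,∞), let JT_p be the James tree space built on ℓ_p, and let B be the closed linear span in (JT_p)* of the biorthogonal functionals {e_v*} of the unit vector basis {e_v} of JT_p. Then JT_p is isomorphic (linearly homeomorphic) to the dual space B*, via the natural evaluation map. -/

import Mathlib

/-- A finite set of vertices of the infinite binary tree (vertices = finite 0-1 sequences,
ordered by extension) is a *descending path* if it consists of the initial segments
`v ++ w.take k`, `0 ≤ k ≤ w.length`, for some vertices `v, w`; i.e. it is totally ordered
by extension and each vertex other than the last is the immediate predecessor of the next. -/
def IsDescendingPath (J : Finset (List Bool)) : Prop :=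
  ∃ v w : List Bool, (J : Set (List Bool)) = {u | ∃ k ≤ w.length, u = v ++ List.take k w}

/-- The set of numbers `(Σ_{j=1}^k |Σ_{v ∈ J_j} f v|^p)^{1/p}` over all finite families
`J_1, …, J_k` of pairwise disjoint descending paths in the binary tree. -/
def jtPathSums (p : ℝ) (f : List Bool → ℝ) : Set ℝ :=
  { s | ∃ (k : ℕ) (J : Fin k → Finset (List Bool)),
      (∀ j, IsDescendingPath (J j)) ∧
      (∀ i j, i ≠ j → Disjoint (J i) (J j)) ∧
      s = (∑ j, |∑ v ∈ J j, f v| ^ p) ^ (1 / p) }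

/-- The Banach space `E` is (a realization of) the James tree space `JT_p` via the
coordinate map `coord`: `coord` identifies `E`, as a vector space, with the space of
functions `f` on the binary tree for which the quantities in `jtPathSums p f` are bounded,
and the norm of `x ∈ E` is the supremum of `jtPathSums p (coord x)`. -/
def IsJamesTreeSpace (p : ℝ) {E : Type*} [NormedAddCommGroup E] [NormedSpace ℝ E]
    [CompleteSpace E] (coord : E →ₗ[ℝ] (List Bool → ℝ)) : Prop :=
  Function.Injective coord ∧
  (∀ f : List Bool → ℝ, f ∈ Set.range coord ↔ BddAbove (jtPathSums p f)) ∧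
  (∀ x : E, ‖x‖ = sSup (jtPathSums p (coord x)))

/-- The closed linear span, in the dual of (a realization of) `JT_p`, of the biorthogonal
functionals `e_v* : x ↦ (coord x) v` of the unit vector basis. -/
noncomputable def jtBiorthSpan {E : Type*} [NormedAddCommGroup E] [NormedSpace ℝ E]
    [CompleteSpace E] (coord : E →ₗ[ℝ] (List Bool → ℝ)) :
    Submodule ℝ (StrongDual ℝ E) :=
  (Submodule.span ℝ
    {φ : StrongDual ℝ E | ∃ v : List Bool, ∀ x : E, φ x = coord x v}).topologicalClosure

noncomputable instance jtBiorthSpan.instAddCommGroup {E : Type*} [NormedAddCommGroup E]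
    [NormedSpace ℝ E] [CompleteSpace E] (coord : E →ₗ[ℝ] (List Bool → ℝ)) :
    AddCommGroup (jtBiorthSpan coord) :=
  Submodule.addCommGroup _

/-!
For disjoint descending paths `J_1, …, J_k` and coefficients `a`, the functional
`∑ⱼ aⱼ ∑_{v ∈ Jⱼ} e_v*` lies in `B` and, by Hölder's inequality, has norm at most `‖a‖_q`.
Since an `ℓ_p`-norm is attained by pairing against the unit ball of `ℓ_q`, these functionals
norm `JT_p`, so the evaluation map `JT_p → B*` is an isometry. For surjectivity, extend
`ψ ∈ B*` to `Φ ∈ (JT_p)**` by Hahn–Banach: by the same duality every path sum of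
`v ↦ Φ(e_v*)` is bounded by `‖Φ‖`, so this function is some `x ∈ JT_p`, and evaluation at `x`
agrees with `Φ` on the `e_v*`, hence on their closed span `B`.
-/

theorem Real.exists_Lq_le_one_inner_eq_Lp {ι : Type*} [Fintype ι] {p q : ℝ}
    (hpq : p.HolderConjugate q) (t : ι → ℝ) :
    ∃ a : ι → ℝ, (∑ i, |a i| ^ q) ^ (1 / q) ≤ 1 ∧
      ∑ i, a i * t i = (∑ i, |t i| ^ p) ^ (1 / p) := by
  set s := (∑ i, |t i| ^ p) ^ (1 / p)
  rcases (show 0 ≤ s by positivity).eq_or_lt with hs | hs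
  · refine ⟨0, ?_, by simp [← hs]⟩
    simp [Real.zero_rpow hpq.symm.ne_zero, Real.zero_rpow (inv_ne_zero hpq.symm.ne_zero)]
  set u : ι → ℝ := fun i => |t i| / s
  have hu : ∀ i, 0 ≤ u i := fun i => by positivity
  have hsum_u : ∑ i, u i ^ p = 1 := by
    have hs_pow : s ^ p = ∑ i, |t i| ^ p := by
      rw [← Real.rpow_mul (by positivity), one_div_mul_cancel hpq.ne_zero, Real.rpow_one]
    simp_rw [u, Real.div_rpow (abs_nonneg _) hs.le, ← Finset.sum_div, ← hs_pow]
    exact div_self (Real.rpow_pos_of_pos hs p).ne'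
  -- the extremal vector of Hölder's inequality
  refine ⟨fun i => SignType.sign (t i) * u i ^ (p - 1), ?_, ?_⟩
  · refine Real.rpow_le_one (by positivity) ?_ (by simpa using hpq.symm.pos.le)
    calc ∑ i, |SignType.sign (t i) * u i ^ (p - 1)| ^ q ≤ ∑ i, (u i ^ (p - 1)) ^ q := by
          refine Finset.sum_le_sum fun i _ => Real.rpow_le_rpow (abs_nonneg _) ?_ hpq.symm.nonneg
          rw [abs_mul, abs_of_nonneg (Real.rpow_nonneg (hu i) _)]
          exact mul_le_of_le_one_left (by positivity) (by
            rcases lt_trichotomy (t i) 0 with h | h | h <;> simp [h])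
      _ = 1 := by simp_rw [← Real.rpow_mul (hu _), hpq.sub_one_mul_conj, hsum_u]
  · calc ∑ i, SignType.sign (t i) * u i ^ (p - 1) * t i = ∑ i, s * u i ^ p := by
          refine Finset.sum_congr rfl fun i _ => ?_
          have htu : |t i| = s * u i := by simp only [u]; field_simp
          rw [mul_right_comm, sign_mul_self, htu, mul_assoc, ← Real.rpow_one_add' (hu i)
            (by linarith [hpq.lt]), add_sub_cancel]
      _ = s := by rw [← Finset.mul_sum, hsum_u, mul_one]

lemma isDescendingPath_singleton (v : List Bool) : IsDescendingPath {v} :=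
  ⟨v, [], by ext u; simp⟩

lemma abs_mem_jtPathSums {p : ℝ} (hp : p ≠ 0) (f : List Bool → ℝ) (v : List Bool) :
    |f v| ∈ jtPathSums p f := by
  refine ⟨1, fun _ => {v}, fun _ => isDescendingPath_singleton v,
    fun i j hij => absurd (Subsingleton.elim i j) hij, ?_⟩
  rw [Fin.sum_univ_one, Finset.sum_singleton, ← Real.rpow_mul (abs_nonneg _),
    mul_one_div_cancel hp, Real.rpow_one]

lemma forall_mem_jtPathSums_le {p q : ℝ} (hpq : p.HolderConjugate q) {f : List Bool → ℝ} {C : ℝ}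
    (h : ∀ (k : ℕ) (J : Fin k → Finset (List Bool)), (∀ j, IsDescendingPath (J j)) →
      (∀ i j, i ≠ j → Disjoint (J i) (J j)) → ∀ a : Fin k → ℝ, (∑ j, |a j| ^ q) ^ (1 / q) ≤ 1 →
        ∑ j, a j * ∑ v ∈ J j, f v ≤ C) :
    ∀ s ∈ jtPathSums p f, s ≤ C := by
  rintro s ⟨k, J, hJ, hdisj, rfl⟩
  obtain ⟨a, ha, hat⟩ := Real.exists_Lq_le_one_inner_eq_Lp hpq (fun j => ∑ v ∈ J j, f v)
  exact hat ▸ h k J hJ hdisj a ha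

namespace IsJamesTreeSpace

variable {p : ℝ} {E : Type*} [NormedAddCommGroup E] [NormedSpace ℝ E] [CompleteSpace E]
  {coord : E →ₗ[ℝ] (List Bool → ℝ)}

lemma le_norm (hJT : IsJamesTreeSpace p coord) {x : E} {s : ℝ}
    (hs : s ∈ jtPathSums p (coord x)) : s ≤ ‖x‖ :=
  hJT.2.2 x ▸ le_csSup ((hJT.2.1 _).1 ⟨x, rfl⟩) hs

lemma abs_coord_le_norm (hJT : IsJamesTreeSpace p coord) (hp : p ≠ 0) (x : E) (v : List Bool) :
    |coord x v| ≤ ‖x‖ :=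
  hJT.le_norm (abs_mem_jtPathSums hp _ v)

/-- The biorthogonal functional `e_v*`. -/
noncomputable def coordCLM (hJT : IsJamesTreeSpace p coord) (hp : p ≠ 0) (v : List Bool) :
    StrongDual ℝ E :=
  LinearMap.mkContinuous ((LinearMap.proj v).comp coord) 1 fun x => by
    simpa using hJT.abs_coord_le_norm hp x v

@[simp] lemma coordCLM_apply (hJT : IsJamesTreeSpace p coord) (hp : p ≠ 0) (v : List Bool)
    (x : E) : hJT.coordCLM hp v x = coord x v := rfl

lemma coordCLM_mem_jtBiorthSpan (hJT : IsJamesTreeSpace p coord) (hp : p ≠ 0) (v : List Bool) :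
    hJT.coordCLM hp v ∈ jtBiorthSpan coord :=
  Submodule.le_topologicalClosure _ <| Submodule.subset_span ⟨v, fun _ => rfl⟩

noncomputable def pathFunctional (hJT : IsJamesTreeSpace p coord) (hp : p ≠ 0) {k : ℕ}
    (J : Fin k → Finset (List Bool)) (a : Fin k → ℝ) : StrongDual ℝ E :=
  ∑ j, a j • ∑ v ∈ J j, hJT.coordCLM hp v

lemma pathFunctional_apply (hJT : IsJamesTreeSpace p coord) (hp : p ≠ 0) {k : ℕ}
    (J : Fin k → Finset (List Bool)) (a : Fin k → ℝ) (x : E) :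
    hJT.pathFunctional hp J a x = ∑ j, a j * ∑ v ∈ J j, coord x v := by
  simp [pathFunctional]

lemma pathFunctional_mem_jtBiorthSpan (hJT : IsJamesTreeSpace p coord) (hp : p ≠ 0) {k : ℕ}
    (J : Fin k → Finset (List Bool)) (a : Fin k → ℝ) :
    hJT.pathFunctional hp J a ∈ jtBiorthSpan coord :=
  Submodule.sum_mem _ fun _ _ => Submodule.smul_mem _ _ <|
    Submodule.sum_mem _ fun v _ => hJT.coordCLM_mem_jtBiorthSpan hp v

lemma norm_pathFunctional_le (hJT : IsJamesTreeSpace p coord) {q : ℝ} (hpq : p.HolderConjugate q)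
    {k : ℕ} {J : Fin k → Finset (List Bool)} (hJ : ∀ j, IsDescendingPath (J j))
    (hdisj : ∀ i j, i ≠ j → Disjoint (J i) (J j)) (a : Fin k → ℝ) :
    ‖hJT.pathFunctional hpq.ne_zero J a‖ ≤ (∑ j, |a j| ^ q) ^ (1 / q) := by
  refine ContinuousLinearMap.opNorm_le_bound _ (by positivity) fun x => ?_
  rw [Real.norm_eq_abs, pathFunctional_apply]
  calc |∑ j, a j * ∑ v ∈ J j, coord x v|
      ≤ ∑ j, |∑ v ∈ J j, coord x v| * |a j| := by
        refine (Finset.abs_sum_le_sum_abs _ _).trans_eq ?_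
        simp_rw [abs_mul, mul_comm]
    _ ≤ (∑ j, |∑ v ∈ J j, coord x v| ^ p) ^ (1 / p) * (∑ j, |a j| ^ q) ^ (1 / q) :=
        Real.inner_le_Lp_mul_Lq_of_nonneg _ hpq (fun _ _ => abs_nonneg _) fun _ _ => abs_nonneg _
    _ ≤ (∑ j, |a j| ^ q) ^ (1 / q) * ‖x‖ := by
        rw [mul_comm]
        gcongr
        exact hJT.le_norm ⟨k, J, hJ, hdisj, rfl⟩

lemma norm_le_of_forall_apply_le (hJT : IsJamesTreeSpace p coord) (hp : 1 < p) {x : E} {C : ℝ}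
    (hC : ∀ b ∈ jtBiorthSpan coord, ‖b‖ ≤ 1 → b x ≤ C) : ‖x‖ ≤ C := by
  have hpq := Real.HolderConjugate.conjExponent hp
  rw [hJT.2.2 x]
  refine csSup_le ⟨_, abs_mem_jtPathSums hpq.ne_zero _ []⟩ <|
    forall_mem_jtPathSums_le hpq fun k J hJ hdisj a ha => ?_
  rw [← hJT.pathFunctional_apply hpq.ne_zero]
  exact hC _ (hJT.pathFunctional_mem_jtBiorthSpan _ J a)
    ((hJT.norm_pathFunctional_le hpq hJ hdisj a).trans ha)

lemma exists_forall_mem_jtBiorthSpan_apply_eq (hJT : IsJamesTreeSpace p coord) (hp : 1 < p)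
    (Φ : StrongDual ℝ (StrongDual ℝ E)) : ∃ x : E, ∀ b ∈ jtBiorthSpan coord, Φ b = b x := by
  have hpq := Real.HolderConjugate.conjExponent hp
  set f : List Bool → ℝ := fun v => Φ (hJT.coordCLM hpq.ne_zero v)
  have hf : BddAbove (jtPathSums p f) := by
    refine ⟨‖Φ‖, forall_mem_jtPathSums_le hpq fun k J hJ hdisj a ha => ?_⟩
    calc ∑ j, a j * ∑ v ∈ J j, f v = Φ (hJT.pathFunctional hpq.ne_zero J a) := by
          simp [f, pathFunctional, map_sum]
      _ ≤ ‖Φ‖ * ‖hJT.pathFunctional hpq.ne_zero J a‖ := (le_abs_self _).trans (Φ.le_opNorm _)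
      _ ≤ ‖Φ‖ := mul_le_of_le_one_right (norm_nonneg Φ)
          ((hJT.norm_pathFunctional_le hpq hJ hdisj a).trans ha)
  obtain ⟨x, hx⟩ := (hJT.2.1 f).2 hf
  refine ⟨x, fun b hb => ?_⟩
  -- `Φ` and evaluation at `x` agree on every `e_v*`, hence on their closed span
  suffices jtBiorthSpan coord ≤ (Φ - NormedSpace.inclusionInDoubleDual ℝ E x).ker by
    simpa [sub_eq_zero] using this hb
  refine Submodule.topologicalClosure_minimal _ (Submodule.span_le.2 ?_)
    (ContinuousLinearMap.isClosed_ker (Φ - NormedSpace.inclusionInDoubleDual ℝ E x))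
  rintro φ ⟨v, hv⟩
  obtain rfl : φ = hJT.coordCLM hpq.ne_zero v := ContinuousLinearMap.ext hv
  simp [f, hx]

end IsJamesTreeSpace

/-- For `p ∈ (2,∞)`, the James tree space `JT_p` is isomorphic to the dual `B*` of the
closed linear span `B ⊆ (JT_p)*` of the biorthogonal functionals, via the natural
evaluation map `x ↦ (b ↦ b x)`. -/
theorem statement10 {p : ℝ} (hp : 2 < p)
    {E : Type*} [NormedAddCommGroup E] [NormedSpace ℝ E] [CompleteSpace E]
    (coord : E →ₗ[ℝ] (List Bool → ℝ)) (hJT : IsJamesTreeSpace p coord) :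
    ∃ T : E ≃L[ℝ] StrongDual ℝ (jtBiorthSpan coord),
      ∀ (x : E) (b : jtBiorthSpan coord), T x b = (b : StrongDual ℝ E) x := by
  have hp1 : 1 < p := by linarith
  -- instance search for the submodule norm fails through `jtBiorthSpan.instAddCommGroup`
  let : SeminormedAddCommGroup (jtBiorthSpan coord) := Submodule.seminormedAddCommGroup _
  let : NormedSpace ℝ (jtBiorthSpan coord) := Submodule.normedSpace _
  let ev : E →L[ℝ] StrongDual ℝ (jtBiorthSpan coord) := (jtBiorthSpan coord).subtypeL.flip
  have hnorm (x : E) : ‖ev x‖ = ‖x‖ := by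
    refine le_antisymm (ContinuousLinearMap.opNorm_le_bound _ (norm_nonneg x) fun b => ?_)
      (hJT.norm_le_of_forall_apply_le hp1 fun b hb hb1 => ?_)
    · exact ((b : StrongDual ℝ E).le_opNorm x).trans_eq (mul_comm _ _)
    · calc b x ≤ ‖ev x‖ * ‖(⟨b, hb⟩ : jtBiorthSpan coord)‖ :=
            (le_abs_self _).trans ((ev x).le_opNorm ⟨b, hb⟩)
        _ ≤ ‖ev x‖ := mul_le_of_le_one_right (norm_nonneg _) hb1
  have hsurj : Function.Surjective ev := fun ψ => by
    obtain ⟨Φ, hΦ, -⟩ := exists_extension_norm_eq _ ψ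
    obtain ⟨x, hx⟩ := hJT.exists_forall_mem_jtBiorthSpan_apply_eq hp1 Φ
    exact ⟨x, ContinuousLinearMap.ext fun b => (hx b b.2).symm.trans (hΦ b)⟩
  exact ⟨(LinearIsometryEquiv.ofSurjective ⟨ev.toLinearMap, hnorm⟩ hsurj).toContinuousLinearEquiv,
    fun _ _ => rfl⟩
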